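/- Let α ∈ (0,1) be irrational with best approximation denominators q_n, and let Q_n = {kα mod 1 : 1 ≤ k ≤ q_n}. If q_n = 2r is even and n is even, then the point rα mod 1 equals 1/2 + (1/2){q_nα}. -/

import Mathlib

/-!
Let `p_n / q_n` be the `n`-th convergent of `α`. For even `n` it lies below `α` and
`0 < q_n α - p_n < 1`, so `{q_n α} = q_n α - p_n`. The determinant identity
`p_n q_{n+1} - q_n p_{n+1} = ±1` makes `p_n` coprime to `q_n`, hence odd when `q_n = 2r`, and then
`r α = (p_n + {q_n α}) / 2` has fractional part `(1 + {q_n α}) / 2`.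
-/

theorem Int.fract_add_div_two_of_odd {K : Type*} [Field K] [LinearOrder K] [IsStrictOrderedRing K]
    [FloorRing K] {p : ℤ} (hp : Odd p) {t : K} (ht₀ : 0 ≤ t) (ht₁ : t < 1) :
    Int.fract ((p + t) / 2) = (1 + t) / 2 := by
  obtain ⟨m, rfl⟩ := hp
  rw [Int.fract_eq_iff]
  exact ⟨by linarith, by linarith, m, by push_cast; ring⟩

namespace GenContFract

open GenContFract (of)

section

variable {K : Type*} [Field K] [LinearOrder K] [FloorRing K]

theorem exists_int_eq_contsAux (v : K) (n : ℕ) :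
    ∃ a b : ℤ, (of v).contsAux n = ⟨(a : K), b⟩ := by
  induction n using Nat.twoStepInduction with
  | zero => exact ⟨1, 0, by simp [zeroth_contAux_eq_one_zero]⟩
  | one => exact ⟨⌊v⌋, 1, by simp [first_contAux_eq_h_one, of_h_eq_floor]⟩
  | more n ih₀ ih₁ =>
    obtain ⟨a₀, b₀, h₀⟩ := ih₀
    obtain ⟨a₁, b₁, h₁⟩ := ih₁
    cases hs : (of v).s.get? n with
    | none => exact ⟨a₁, b₁, (contsAux_stable_step_of_terminated hs).trans h₁⟩
    | some gp =>
      obtain ⟨z, hz⟩ := exists_int_eq_of_partDen (partDen_eq_s_b hs)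
      have ha : gp.a = 1 := of_partNum_eq_one (partNum_eq_s_a hs)
      exact ⟨z * a₁ + a₀, z * b₁ + b₀, by simp [contsAux_recurrence hs h₀ h₁, ha, hz]⟩

theorem exists_int_eq_nums (v : K) (n : ℕ) : ∃ p : ℤ, (of v).nums n = p := by
  obtain ⟨a, _, h⟩ := exists_int_eq_contsAux v (n + 1)
  exact ⟨a, by rw [num_eq_conts_a, nth_cont_eq_succ_nth_contAux, h]⟩

theorem exists_int_eq_dens (v : K) (n : ℕ) : ∃ q : ℤ, (of v).dens n = q := by
  obtain ⟨_, b, h⟩ := exists_int_eq_contsAux v (n + 1)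
  exact ⟨b, by rw [den_eq_conts_b, nth_cont_eq_succ_nth_contAux, h]⟩

theorem isCoprime_of_nums_eq_of_dens_eq {v : K} {n : ℕ} (h : ¬(of v).TerminatedAt n) {p q : ℤ}
    (hp : (of v).nums n = p) (hq : (of v).dens n = q) : IsCoprime p q := by
  obtain ⟨p', hp'⟩ := exists_int_eq_nums v (n + 1)
  obtain ⟨q', hq'⟩ := exists_int_eq_dens v (n + 1)
  have hdet : p * q' - q * p' = (-1) ^ (n + 1) := by
    have := SimpContFract.determinant (s := SimpContFract.of v) h
    change (of v).nums n * (of v).dens (n + 1) - (of v).dens n * (of v).nums (n + 1) = _ at this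
    rw [hp, hq, hp', hq'] at this
    exact_mod_cast this
  have hsq : ((-1 : ℤ) ^ (n + 1)) ^ 2 = 1 := by rw [← pow_mul, mul_comm, pow_mul]; norm_num
  exact ⟨(-1) ^ (n + 1) * q', -(-1) ^ (n + 1) * p', by linear_combination (-1) ^ (n + 1) * hdet + hsq⟩

end

variable {K : Type*} [Field K] [LinearOrder K] [IsStrictOrderedRing K] [FloorRing K]

theorem one_le_dens (v : K) (n : ℕ) : 1 ≤ (of v).dens n := by
  have hmono : Monotone (of v).dens := monotone_nat_of_le_succ fun _ => of_den_mono
  simpa [zeroth_den_eq_one] using hmono n.zero_le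

theorem dens_mul_sub_nums_mem_Ioo_of_even {v : K} {n : ℕ} (hn : Even n)
    (h : ¬(of v).TerminatedAt n) : (of v).dens n * v - (of v).nums n ∈ Set.Ioo 0 1 := by
  obtain ⟨ifp', hifp'⟩ := Option.ne_none_iff_exists'.mp
    (mt of_terminatedAt_n_iff_succ_nth_intFractPair_stream_eq_none.mpr h)
  obtain ⟨ifp, hifp, hfr, -⟩ := IntFractPair.succ_nth_stream_eq_some_iff.mp hifp'
  have hfr_pos : 0 < ifp.fr := (IntFractPair.nth_stream_fr_nonneg hifp).lt_of_ne' hfr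
  have hfr_inv : 1 < ifp.fr⁻¹ := (one_lt_inv₀ hfr_pos).2 (IntFractPair.nth_stream_fr_lt_one hifp)
  set B := (of v).dens n
  set A := ((of v).contsAux n).b
  have hB : 1 ≤ B := one_le_dens v n
  have hA : 0 ≤ A := zero_le_of_contsAux_b
  have hgt : 1 < ifp.fr⁻¹ * B + A := by nlinarith
  have hsub : v - (of v).nums n / B = 1 / (B * (ifp.fr⁻¹ * B + A)) := by
    have := sub_convs_eq hifp
    simp only [if_neg hfr, hn.neg_one_pow, conv_eq_num_div_den] at this
    exact this
  have key : B * v - (of v).nums n = (ifp.fr⁻¹ * B + A)⁻¹ := by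
    calc B * v - (of v).nums n = B * (v - (of v).nums n / B) := by field_simp
      _ = (ifp.fr⁻¹ * B + A)⁻¹ := by rw [hsub]; field_simp
  rw [key]
  exact ⟨inv_pos.2 (by linarith), inv_lt_one_of_one_lt₀ hgt⟩

theorem not_terminatedAt_of_irrational {α : ℝ} (hα : Irrational α) (n : ℕ) :
    ¬(of α).TerminatedAt n := fun h =>
  let ⟨q, hq⟩ := (terminates_iff_rat α).mp ⟨n, h⟩
  hα ⟨q, hq.symm⟩

end GenContFract

theorem midpoint_of_even_denominator_general (α : ℝ) (hα : Irrational α)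
    (n : ℕ) (qn r : ℕ)
    (hqn : (qn : ℝ) = (GenContFract.of α).dens n) (hr : qn = 2 * r)
    (hn : Even n) :
    Int.fract ((r : ℝ) * α) = 1 / 2 + (1 / 2) * Int.fract ((qn : ℝ) * α) := by
  have hnt := GenContFract.not_terminatedAt_of_irrational hα n
  obtain ⟨p, hp⟩ := GenContFract.exists_int_eq_nums α n
  have hq : (GenContFract.of α).dens n = ((2 * r : ℤ) : ℝ) := by rw [← hqn, hr]; push_cast; rfl
  have hodd : Odd p := Int.isCoprime_two_right.mp
    (GenContFract.isCoprime_of_nums_eq_of_dens_eq hnt hp hq).of_mul_right_left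
  obtain ⟨hpos, hlt⟩ := GenContFract.dens_mul_sub_nums_mem_Ioo_of_even hn hnt
  rw [← hqn, hp] at hpos hlt
  have hfract : Int.fract ((qn : ℝ) * α) = qn * α - p :=
    Int.fract_eq_iff.mpr ⟨hpos.le, hlt, p, by ring⟩
  have hrα : (r : ℝ) * α = (p + Int.fract ((qn : ℝ) * α)) / 2 := by
    rw [hfract, hr]; push_cast; ring
  rw [hrα, Int.fract_add_div_two_of_odd hodd (Int.fract_nonneg _) (Int.fract_lt_one _)]
  ring

/-- If `q_n = 2r` is even and `n` is even, then `rα mod 1 = 1/2 + (1/2){q_nα}`. -/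
theorem midpoint_of_even_denominator (α : ℝ) (hα : Irrational α)
    (hα01 : α ∈ Set.Ioo (0 : ℝ) 1) (n : ℕ) (qn r : ℕ)
    (hqn : (qn : ℝ) = (GenContFract.of α).dens n) (hr : qn = 2 * r)
    (hn : Even n) :
    Int.fract ((r : ℝ) * α) = 1 / 2 + (1 / 2) * Int.fract ((qn : ℝ) * α) :=
  midpoint_of_even_denominator_general α hα n qn r hqn hr hn
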